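/- Consider the linear system Ax = b where A ∈ ℝ^{N×N} is symmetric positive definite with distinct eigenvalues 0 < λ_1 < ... < λ_N and orthonormal eigenvectors v_1, ..., v_N, let f(x) = (1/2) xᵀ A x − bᵀ x, and let x_* = A⁻¹ b be its unique minimizer. Let the iterates be generated by the minimal gradient (MG) method x_{n+1} = x_n − α_n^MG g_n, where g_n = A x_n − b and α_n^MG = (g_nᵀ A g_n)/(g_nᵀ A² g_n). Write g_n = Σ_{i=1}^N ζ_{i,n} v_i. If the starting point x_0 satisfies ζ_{1,0} ≠ 0 and ζ_{N,0} ≠ 0 (hence g_n ≠ 0 for all n), then lim_{n→∞} (f(x_{2n+2}) − f(x_*))/(f(x_{2n}) − f(x_*)) = lim_{n→∞} ‖g_{n+1}‖⁴ / ‖g_n‖⁴, i.e., both limits exist and are equal. -/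

import Mathlib

open Filter Topology Matrix

private lemma sum_dotProduct_aux {n m : Type*} [Fintype n] (t : Finset m) (f : m → n → ℝ)
    (w : n → ℝ) : (∑ i ∈ t, f i) ⬝ᵥ w = ∑ i ∈ t, f i ⬝ᵥ w := by
  classical
  induction t using Finset.induction_on with
  | empty => simp
  | insert _ _ h ih => rw [Finset.sum_insert h, Finset.sum_insert h, add_dotProduct, ih]

private lemma dotProduct_sum_aux {n m : Type*} [Fintype n] (t : Finset m) (w : n → ℝ)
    (f : m → n → ℝ) : w ⬝ᵥ (∑ i ∈ t, f i) = ∑ i ∈ t, w ⬝ᵥ f i := by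
  classical
  induction t using Finset.induction_on with
  | empty => simp
  | insert _ _ h ih => rw [Finset.sum_insert h, Finset.sum_insert h, dotProduct_add, ih]

private lemma tendsto_dotProduct_aux {N : ℕ} {ι : Type*} {l : Filter ι}
    {xs ys : ι → Fin N → ℝ} {w z : Fin N → ℝ}
    (hx : Tendsto xs l (𝓝 w)) (hy : Tendsto ys l (𝓝 z)) :
    Tendsto (fun j => xs j ⬝ᵥ ys j) l (𝓝 (w ⬝ᵥ z)) := by
  have h : ∀ i, Tendsto (fun j => xs j i * ys j i) l (𝓝 (w i * z i)) :=
    fun i => ((tendsto_pi_nhds.1 hx i).mul (tendsto_pi_nhds.1 hy i))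
  have : w ⬝ᵥ z = ∑ i, w i * z i := rfl
  rw [this]
  exact tendsto_finset_sum Finset.univ (fun i _ => h i)

private lemma tendsto_mulVec_aux {N : ℕ} {ι : Type*} {l : Filter ι}
    (A : Matrix (Fin N) (Fin N) ℝ) {xs : ι → Fin N → ℝ} {w : Fin N → ℝ}
    (hx : Tendsto xs l (𝓝 w)) :
    Tendsto (fun j => A *ᵥ (xs j)) l (𝓝 (A *ᵥ w)) := by
  rw [tendsto_pi_nhds]
  intro i
  exact tendsto_dotProduct_aux (tendsto_const_nhds (x := fun k => A i k)) hx


private lemma tail_ratio_lemma {F : ℕ → ℝ} {L : ℝ} (hL : 0 < L)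
    (hpos : ∀ n, 0 < F n) (hdec : ∀ n, F (n + 1) < F n)
    (hF0 : Tendsto F atTop (𝓝 0))
    (hr : Tendsto (fun n => (F (n + 1) - F (n + 2)) / (F n - F (n + 1))) atTop (𝓝 L)) :
    Tendsto (fun n => F (n + 1) / F n) atTop (𝓝 L) := by
  rw [Metric.tendsto_atTop] at hr ⊢
  intro ε hε
  have hε' : 0 < min (ε / 2) (L / 2) := lt_min (by linarith) (by linarith)
  obtain ⟨K, hK⟩ := hr _ hε'
  set ε' := min (ε / 2) (L / 2) with hε'def
  have hε'1 : ε' ≤ ε / 2 := min_le_left _ _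
  have hε'2 : ε' ≤ L / 2 := min_le_right _ _
  refine ⟨K, fun n hn => ?_⟩
  have hterm : ∀ k, K ≤ k → (L - ε') * (F k - F (k + 1)) ≤ F (k + 1) - F (k + 2) ∧
      F (k + 1) - F (k + 2) ≤ (L + ε') * (F k - F (k + 1)) := by
    intro k hk
    have hd : 0 < F k - F (k + 1) := sub_pos.2 (hdec k)
    have h := hK k hk
    rw [Real.dist_eq, abs_lt] at h
    constructor
    · have h1 : L - ε' < (F (k + 1) - F (k + 2)) / (F k - F (k + 1)) := by linarith [h.1]
      exact le_of_lt ((lt_div_iff₀ hd).1 h1)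
    · have h2 : (F (k + 1) - F (k + 2)) / (F k - F (k + 1)) < L + ε' := by linarith [h.2]
      exact le_of_lt ((div_lt_iff₀ hd).1 h2)
  -- summed bounds
  have hsum : ∀ M : ℕ, F (n + 1) - F (n + M + 1) ≤ (L + ε') * (F n - F (n + M)) ∧
      (L - ε') * (F n - F (n + M)) ≤ F (n + 1) - F (n + M + 1) := by
    intro M
    have e1 : ∑ i ∈ Finset.range M, (F (n + i + 1) - F (n + i + 2)) = F (n + 1) - F (n + M + 1) := by
      have := Finset.sum_range_sub' (fun i => F (n + i + 1)) M
      simpa only [show ∀ i, n + (i + 1) + 1 = n + i + 2 from fun i => by omega,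
        show n + 0 + 1 = n + 1 from by omega] using this
    have e2 : ∑ i ∈ Finset.range M, (F (n + i) - F (n + i + 1)) = F n - F (n + M) := by
      have := Finset.sum_range_sub' (fun i => F (n + i)) M
      simpa only [show ∀ i, n + (i + 1) = n + i + 1 from fun i => by omega,
        show n + 0 = n from by omega] using this
    constructor
    · calc F (n + 1) - F (n + M + 1) = ∑ i ∈ Finset.range M, (F (n + i + 1) - F (n + i + 2)) :=
            e1.symm
        _ ≤ ∑ i ∈ Finset.range M, (L + ε') * (F (n + i) - F (n + i + 1)) := by
            refine Finset.sum_le_sum (fun i _ => ?_)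
            have := (hterm (n + i) (le_trans hn (Nat.le_add_right _ _))).2
            simpa only [show n + i + 1 = (n + i) + 1 from rfl] using this
        _ = (L + ε') * (F n - F (n + M)) := by rw [← Finset.mul_sum, e2]
    · calc (L - ε') * (F n - F (n + M)) = ∑ i ∈ Finset.range M, (L - ε') * (F (n + i) - F (n + i + 1)) := by
            rw [← Finset.mul_sum, e2]
        _ ≤ ∑ i ∈ Finset.range M, (F (n + i + 1) - F (n + i + 2)) := by
            refine Finset.sum_le_sum (fun i _ => ?_)
            exact (hterm (n + i) (le_trans hn (Nat.le_add_right _ _))).1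
        _ = F (n + 1) - F (n + M + 1) := e1
  -- pass to the limit M → ∞
  have htail1 : Tendsto (fun M : ℕ => F (n + M)) atTop (𝓝 0) :=
    hF0.comp (tendsto_atTop_mono (fun M => (Nat.le_add_left M n : M ≤ n + M)) tendsto_id)
  have htail2 : Tendsto (fun M : ℕ => F (n + M + 1)) atTop (𝓝 0) :=
    hF0.comp (tendsto_atTop_mono (fun M => (by omega : (M:ℕ) ≤ n + M + 1)) tendsto_id)
  have hub : F (n + 1) ≤ (L + ε') * F n := by
    have l1 : Tendsto (fun M : ℕ => F (n + 1) - F (n + M + 1)) atTop (𝓝 (F (n + 1))) := by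
      simpa using tendsto_const_nhds.sub htail2
    have l2 : Tendsto (fun M : ℕ => (L + ε') * (F n - F (n + M))) atTop (𝓝 ((L + ε') * F n)) := by
      simpa using tendsto_const_nhds.mul (tendsto_const_nhds.sub htail1)
    exact le_of_tendsto_of_tendsto' l1 l2 (fun M => (hsum M).1)
  have hlb : (L - ε') * F n ≤ F (n + 1) := by
    have l1 : Tendsto (fun M : ℕ => F (n + 1) - F (n + M + 1)) atTop (𝓝 (F (n + 1))) := by
      simpa using tendsto_const_nhds.sub htail2
    have l2 : Tendsto (fun M : ℕ => (L - ε') * (F n - F (n + M))) atTop (𝓝 ((L - ε') * F n)) := by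
      simpa using tendsto_const_nhds.mul (tendsto_const_nhds.sub htail1)
    exact le_of_tendsto_of_tendsto' l2 l1 (fun M => (hsum M).2)
  have hFn := hpos n
  rw [Real.dist_eq]
  have b1 : F (n + 1) / F n ≤ L + ε' := (div_le_iff₀ hFn).2 hub
  have b2 : L - ε' ≤ F (n + 1) / F n := (le_div_iff₀ hFn).2 hlb
  have : |F (n + 1) / F n - L| ≤ ε' := abs_le.2 ⟨by linarith, by linarith⟩
  linarith


set_option maxHeartbeats 2000000 in
theorem mg_function_value_vs_gradient_fourth_power
    (N : ℕ) (hN : 2 ≤ N)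
    (A : Matrix (Fin N) (Fin N) ℝ) (b : Fin N → ℝ)
    (hA : A.PosDef)
    (lam : Fin N → ℝ) (v : Fin N → Fin N → ℝ)
    (hlam0 : 0 < lam ⟨0, by omega⟩)
    (hmono : StrictMono lam)
    (heig : ∀ i, A.mulVec (v i) = lam i • v i)
    (horth : ∀ i j, v i ⬝ᵥ v j = if i = j then (1 : ℝ) else 0)
    (x g : ℕ → Fin N → ℝ) (alpha : ℕ → ℝ)
    (hg : ∀ n, g n = A.mulVec (x n) - b)
    (halpha : ∀ n, alpha n =
      (g n ⬝ᵥ A.mulVec (g n)) / (g n ⬝ᵥ A.mulVec (A.mulVec (g n))))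
    (hx : ∀ n, x (n + 1) = x n - alpha n • g n)
    (zeta : ℕ → Fin N → ℝ)
    (hzeta : ∀ n, g n = ∑ i, zeta n i • v i)
    (hz1 : zeta 0 ⟨0, by omega⟩ ≠ 0)
    (hzN : zeta 0 ⟨N - 1, by omega⟩ ≠ 0)
    (f : (Fin N → ℝ) → ℝ)
    (hf : ∀ y, f y = (1 / 2) * (y ⬝ᵥ A.mulVec y) - b ⬝ᵥ y)
    (xstar : Fin N → ℝ) (hxstar : A.mulVec xstar = b) :
    ∃ L : ℝ,
      Tendsto (fun n => (f (x (2 * n + 2)) - f xstar) / (f (x (2 * n)) - f xstar)) atTop (𝓝 L) ∧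
      Tendsto (fun n => (g (n + 1) ⬝ᵥ g (n + 1)) ^ 2 / (g n ⬝ᵥ g n) ^ 2) atTop (𝓝 L) := by
  classical
  have hN1 : 0 < N := by omega
  set i0 : Fin N := ⟨0, by omega⟩ with hi0def
  set iN : Fin N := ⟨N - 1, by omega⟩ with hiNdef
  have hi0N : i0 < iN := by rw [Fin.lt_def]; simp [hi0def, hiNdef]; omega
  have hlam_lb : ∀ i, lam i0 ≤ lam i := by
    intro i; exact hmono.monotone (by rw [Fin.le_def]; simp [hi0def])
  have hlam_ub : ∀ i, lam i ≤ lam iN := by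
    intro i
    exact hmono.monotone (by rw [Fin.le_def]; simp [hiNdef]; omega)
  have hlam_pos : ∀ i, 0 < lam i := fun i => lt_of_lt_of_le hlam0 (hlam_lb i)
  have hlam0N : lam i0 < lam iN := hmono hi0N
  -- symmetry of A
  have hAT : Aᵀ = A := by
    rw [← Matrix.conjTranspose_eq_transpose_of_trivial]; exact hA.1.eq
  have hsym : ∀ u w : Fin N → ℝ, u ⬝ᵥ A *ᵥ w = w ⬝ᵥ A *ᵥ u := by
    intro u w
    conv_lhs => rw [dotProduct_mulVec, ← hAT, vecMul_transpose]
    exact dotProduct_comm _ _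
  have hpd : ∀ u : Fin N → ℝ, u ≠ 0 → 0 < u ⬝ᵥ A *ᵥ u := by
    intro u hu
    have := hA.dotProduct_mulVec_pos hu
    simpa using this
  have hdotself_nonneg : ∀ u : Fin N → ℝ, 0 ≤ u ⬝ᵥ u :=
    fun u => Finset.sum_nonneg (fun i _ => mul_self_nonneg _)
  have hdotself_pos : ∀ u : Fin N → ℝ, u ≠ 0 → 0 < u ⬝ᵥ u := fun u hu =>
    (hdotself_nonneg u).lt_of_ne (fun h => hu (dotProduct_self_eq_zero.1 h.symm))
  have hAinj : ∀ u : Fin N → ℝ, A *ᵥ u = 0 → u = 0 := by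
    intro u hu
    by_contra h
    have h1 := hpd u h
    rw [hu, dotProduct_zero] at h1
    exact lt_irrefl 0 h1
  -- coordinates
  have hzv : ∀ n i, g n ⬝ᵥ v i = zeta n i := by
    intro n i
    rw [hzeta n, sum_dotProduct_aux]
    simp [smul_dotProduct, horth, smul_eq_mul]
  have hvw : ∀ (c : Fin N → ℝ) i, v i ⬝ᵥ (∑ j, c j • v j) = c i := by
    intro c i
    rw [dotProduct_sum_aux]
    simp [dotProduct_smul, horth, smul_eq_mul]
  have hexp : ∀ (c e : Fin N → ℝ), (∑ i, c i • v i) ⬝ᵥ (∑ i, e i • v i) = ∑ i, c i * e i := by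
    intro c e
    rw [sum_dotProduct_aux]
    refine Finset.sum_congr rfl (fun i _ => ?_)
    rw [smul_dotProduct, hvw e i, smul_eq_mul]
  have hvA : ∀ (c : Fin N → ℝ), A *ᵥ (∑ i, c i • v i) = ∑ i, (c i * lam i) • v i := by
    intro c
    rw [show A *ᵥ (∑ i, c i • v i) = A.mulVecLin (∑ i, c i • v i) from rfl, map_sum]
    refine Finset.sum_congr rfl (fun i _ => ?_)
    rw [_root_.map_smul, Matrix.mulVecLin_apply, heig i, smul_smul]
  have hgA : ∀ n, A *ᵥ g n = ∑ i, (zeta n i * lam i) • v i := by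
    intro n; rw [hzeta n]; exact hvA _
  have hgAA : ∀ n, A *ᵥ (A *ᵥ g n) = ∑ i, ((zeta n i * lam i) * lam i) • v i := by
    intro n; rw [hgA n]; exact hvA _
  set G : ℕ → ℝ := fun n => g n ⬝ᵥ g n with hGdef
  set s : ℕ → ℝ := fun n => g n ⬝ᵥ (A *ᵥ g n) with hsdef
  set d : ℕ → ℝ := fun n => g n ⬝ᵥ (A *ᵥ (A *ᵥ g n)) with hddef
  have hGzeta : ∀ n, G n = ∑ i, zeta n i * zeta n i := by
    intro n
    show g n ⬝ᵥ g n = _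
    rw [hzeta n, hexp]
  have hszeta : ∀ n, s n = ∑ i, lam i * (zeta n i * zeta n i) := by
    intro n
    show g n ⬝ᵥ (A *ᵥ g n) = _
    have h := hexp (zeta n) (fun i => zeta n i * lam i)
    rw [← hzeta n, ← hgA n] at h
    rw [h]
    exact Finset.sum_congr rfl (fun i _ => by ring)
  have hdzeta : ∀ n, d n = ∑ i, (lam i * lam i) * (zeta n i * zeta n i) := by
    intro n
    show g n ⬝ᵥ (A *ᵥ (A *ᵥ g n)) = _
    have h := hexp (zeta n) (fun i => (zeta n i * lam i) * lam i)
    rw [← hzeta n, ← hgAA n] at h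
    rw [h]
    exact Finset.sum_congr rfl (fun i _ => by ring)
  have halpha' : ∀ n, alpha n = s n / d n := fun n => halpha n
  -- recurrences
  have hgrec : ∀ n, g (n + 1) = g n - alpha n • (A *ᵥ g n) := by
    intro n
    rw [hg (n + 1), hx n, Matrix.mulVec_sub, Matrix.mulVec_smul, hg n]
    abel
  have hzrec : ∀ n i, zeta (n + 1) i = (1 - alpha n * lam i) * zeta n i := by
    intro n i
    have h2 : (A *ᵥ g n) ⬝ᵥ v i = lam i * zeta n i := by
      rw [dotProduct_comm, hsym (v i) (g n), heig i, dotProduct_smul, hzv n i, smul_eq_mul]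
    have h3 : g (n + 1) ⬝ᵥ v i = g n ⬝ᵥ v i - alpha n * ((A *ᵥ g n) ⬝ᵥ v i) := by
      rw [hgrec n, sub_dotProduct, smul_dotProduct, smul_eq_mul]
    rw [← hzv (n + 1) i, h3, h2, hzv n i]
    ring
  -- persistence of extreme components
  have hzz : ∀ n, zeta n i0 ≠ 0 ∧ zeta n iN ≠ 0 := by
    intro n
    induction n with
    | zero => exact ⟨hz1, hzN⟩
    | succ n ih =>
      obtain ⟨h0, hN'⟩ := ih
      have hgne : g n ≠ 0 := by
        intro h; apply h0; rw [← hzv n i0, h, zero_dotProduct]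
      have hspos : 0 < s n := hpd _ hgne
      have hdAA : d n = (A *ᵥ g n) ⬝ᵥ (A *ᵥ g n) := hsym (g n) (A *ᵥ g n)
      have hdpos : 0 < d n := by
        rw [hdAA]
        exact hdotself_pos _ (fun h => hgne (hAinj _ h))
      have key1 : 0 < d n - lam i0 * s n := by
        have e : d n - lam i0 * s n = ∑ i, (lam i * (lam i - lam i0)) * (zeta n i * zeta n i) := by
          rw [hdzeta n, hszeta n, Finset.mul_sum, ← Finset.sum_sub_distrib]
          exact Finset.sum_congr rfl (fun i _ => by ring)
        rw [e]
        refine Finset.sum_pos' (fun i _ => ?_) ⟨iN, Finset.mem_univ _, ?_⟩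
        · exact mul_nonneg (mul_nonneg (hlam_pos i).le (by linarith [hlam_lb i])) (mul_self_nonneg _)
        · exact mul_pos (mul_pos (hlam_pos iN) (by linarith)) (mul_self_pos.2 hN')
      have key2 : 0 < lam iN * s n - d n := by
        have e : lam iN * s n - d n = ∑ i, (lam i * (lam iN - lam i)) * (zeta n i * zeta n i) := by
          rw [hdzeta n, hszeta n, Finset.mul_sum, ← Finset.sum_sub_distrib]
          exact Finset.sum_congr rfl (fun i _ => by ring)
        rw [e]
        refine Finset.sum_pos' (fun i _ => ?_) ⟨i0, Finset.mem_univ _, ?_⟩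
        · exact mul_nonneg (mul_nonneg (hlam_pos i).le (by linarith [hlam_ub i])) (mul_self_nonneg _)
        · exact mul_pos (mul_pos (hlam_pos i0) (by linarith)) (mul_self_pos.2 h0)
      have hal0 : alpha n * lam i0 < 1 := by
        rw [halpha' n, div_mul_eq_mul_div, div_lt_one hdpos]
        nlinarith
      have halN : 1 < alpha n * lam iN := by
        rw [halpha' n, div_mul_eq_mul_div, one_lt_div hdpos]
        nlinarith
      constructor
      · rw [hzrec n i0]
        exact mul_ne_zero (ne_of_gt (by linarith)) h0
      · rw [hzrec n iN]
        exact mul_ne_zero (ne_of_lt (by linarith)) hN'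
  -- global positivity facts
  have hgne : ∀ n, g n ≠ 0 := by
    intro n h
    exact (hzz n).1 (by rw [← hzv n i0, h, zero_dotProduct])
  have hGpos : ∀ n, 0 < G n := fun n => hdotself_pos _ (hgne n)
  have hspos : ∀ n, 0 < s n := fun n => hpd _ (hgne n)
  have hdAA : ∀ n, d n = (A *ᵥ g n) ⬝ᵥ (A *ᵥ g n) := fun n => hsym (g n) (A *ᵥ g n)
  have hdpos : ∀ n, 0 < d n := by
    intro n; rw [hdAA n]; exact hdotself_pos _ (fun h => hgne n (hAinj _ h))
  have had : ∀ n, alpha n * d n = s n := by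
    intro n; rw [halpha' n]; field_simp [(hdpos n).ne']
  have hapos : ∀ n, 0 < alpha n := fun n => by
    rw [halpha' n]; exact div_pos (hspos n) (hdpos n)
  have hAgg : ∀ n, (A *ᵥ g n) ⬝ᵥ g n = s n := fun n => dotProduct_comm _ _
  -- one-step identity for G
  have hG' : ∀ n, G (n + 1) = G n - alpha n * s n := by
    intro n
    have c1 : g n ⬝ᵥ (A *ᵥ g n) = s n := rfl
    have c3 : (A *ᵥ g n) ⬝ᵥ (A *ᵥ g n) = d n := (hdAA n).symm
    have c4 : g n ⬝ᵥ g n = G n := rfl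
    have e1 : G (n + 1) = G n - 2 * (alpha n * s n) + alpha n * (alpha n * d n) := by
      show g (n + 1) ⬝ᵥ g (n + 1) = _
      rw [hgrec n]
      simp only [sub_dotProduct, dotProduct_sub, smul_dotProduct, dotProduct_smul, smul_eq_mul]
      rw [c1, hAgg n, c3, c4]
      ring
    rw [e1, had n]
    ring
  have horthog : ∀ n, g (n + 1) ⬝ᵥ (A *ᵥ g n) = 0 := by
    intro n
    rw [hgrec n, sub_dotProduct, smul_dotProduct, smul_eq_mul, ← hdAA n]
    have c1 : g n ⬝ᵥ (A *ᵥ g n) = s n := rfl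
    rw [c1]
    have := had n
    linarith
  have hinner1 : ∀ n, g (n + 1) ⬝ᵥ g n = G (n + 1) := by
    intro n
    have c4 : g n ⬝ᵥ g n = G n := rfl
    rw [hG' n, hgrec n, sub_dotProduct, smul_dotProduct, smul_eq_mul, hAgg n, c4]
  have hinner2 : ∀ n, g (n + 2) ⬝ᵥ g n = G (n + 1) := by
    intro n
    have h1 : g (n + 2) = g (n + 1) - alpha (n + 1) • (A *ᵥ g (n + 1)) := hgrec (n + 1)
    rw [h1, sub_dotProduct, smul_dotProduct, smul_eq_mul]
    have c : (A *ᵥ g (n + 1)) ⬝ᵥ g n = 0 := by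
      rw [dotProduct_comm, hsym (g n) (g (n + 1))]
      exact horthog n
    rw [c, hinner1 n]
    ring
  -- Cauchy-Schwarz
  have hsq : ∀ z : Fin N → ℝ, z ⬝ᵥ z = ∑ i, z i ^ 2 :=
    fun z => Finset.sum_congr rfl (fun i _ => (pow_two (z i)).symm)
  have hCS : ∀ u w : Fin N → ℝ, (u ⬝ᵥ w) ^ 2 ≤ (u ⬝ᵥ u) * (w ⬝ᵥ w) := by
    intro u w
    have h := Finset.sum_mul_sq_le_sq_mul_sq Finset.univ u w
    rw [hsq u, hsq w]
    exact h
  -- the ratio R and its monotone convergence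
  set R : ℕ → ℝ := fun n => G (n + 1) / G n with hRdef
  have hRpos : ∀ n, 0 < R n := fun n => div_pos (hGpos _) (hGpos _)
  have hRmono : Monotone R := by
    apply monotone_nat_of_le_succ
    intro n
    show G (n + 1) / G n ≤ G (n + 2) / G (n + 1)
    rw [div_le_div_iff₀ (hGpos n) (hGpos (n + 1))]
    have h := hCS (g (n + 2)) (g n)
    rw [hinner2 n] at h
    calc G (n + 1) * G (n + 1) = G (n + 1) ^ 2 := (pow_two _).symm
      _ ≤ (g (n + 2) ⬝ᵥ g (n + 2)) * (g n ⬝ᵥ g n) := h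
      _ = G (n + 2) * G n := rfl
  set cc : ℝ := 1 - (lam i0) ^ 2 / (lam iN) ^ 2 with hccdef
  have hcc1 : cc < 1 := by
    have h := div_pos (pow_pos (hlam_pos i0) 2) (pow_pos (hlam_pos iN) 2)
    rw [hccdef]; linarith
  have hcc0 : 0 ≤ cc := by
    rw [hccdef, sub_nonneg, div_le_one (pow_pos (hlam_pos iN) 2)]
    exact pow_le_pow_left₀ (hlam_pos i0).le (hlam_ub i0) 2
  have hslb : ∀ n, lam i0 * G n ≤ s n := by
    intro n
    rw [hszeta n, hGzeta n, Finset.mul_sum]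
    exact Finset.sum_le_sum fun i _ => mul_le_mul_of_nonneg_right (hlam_lb i) (mul_self_nonneg _)
  have hdub : ∀ n, d n ≤ (lam iN) ^ 2 * G n := by
    intro n
    rw [hdzeta n, hGzeta n, Finset.mul_sum]
    refine Finset.sum_le_sum fun i _ => mul_le_mul_of_nonneg_right ?_ (mul_self_nonneg _)
    nlinarith [hlam_ub i, hlam_pos i]
  have hGub : ∀ n, G (n + 1) ≤ cc * G n := by
    intro n
    have has : alpha n * s n = s n * s n / d n := by
      rw [halpha' n]; field_simp
    have key : (lam i0) ^ 2 / (lam iN) ^ 2 * G n ≤ s n * s n / d n := by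
      rw [div_mul_eq_mul_div, div_le_div_iff₀ (pow_pos (hlam_pos iN) 2) (hdpos n)]
      have h1 : (lam i0 * G n) * (lam i0 * G n) ≤ s n * s n :=
        mul_le_mul (hslb n) (hslb n) (mul_pos (hlam_pos i0) (hGpos n)).le (hspos n).le
      have h2 : lam i0 ^ 2 * G n * d n ≤ lam i0 ^ 2 * G n * (lam iN ^ 2 * G n) :=
        mul_le_mul_of_nonneg_left (hdub n) (mul_pos (pow_pos (hlam_pos i0) 2) (hGpos n)).le
      have h3 : (lam i0 * G n) * (lam i0 * G n) * lam iN ^ 2 ≤ (s n * s n) * lam iN ^ 2 :=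
        mul_le_mul_of_nonneg_right h1 (by positivity)
      nlinarith [h3, h2]
    rw [hG' n, has, hccdef]
    nlinarith [key]
  have hRub : ∀ n, R n ≤ cc := by
    intro n
    show G (n + 1) / G n ≤ cc
    rw [div_le_iff₀ (hGpos n)]
    exact hGub n
  have hbdd : BddAbove (Set.range R) := by
    refine ⟨cc, ?_⟩
    rintro _ ⟨n, rfl⟩
    exact hRub n
  set L0 : ℝ := ⨆ n, R n with hL0def
  have hRtend : Tendsto R atTop (𝓝 L0) := tendsto_atTop_ciSup hRmono hbdd
  have hL0pos : 0 < L0 := lt_of_lt_of_le (hRpos 0) (le_ciSup hbdd 0)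
  have hL0le : L0 ≤ cc := ciSup_le hRub
  -- G tends to zero geometrically
  have hGgeo : ∀ n, G n ≤ G 0 * cc ^ n := by
    intro n
    induction n with
    | zero => simp
    | succ n ih =>
      calc G (n + 1) ≤ cc * G n := hGub n
        _ ≤ cc * (G 0 * cc ^ n) := mul_le_mul_of_nonneg_left ih hcc0
        _ = G 0 * cc ^ (n + 1) := by ring
  have hGtend : Tendsto G atTop (𝓝 0) := by
    apply squeeze_zero (fun n => (hGpos n).le) hGgeo
    have h := (tendsto_pow_atTop_nhds_zero_of_lt_one hcc0 hcc1).const_mul (G 0)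
    simpa using h
  have hgtend : Tendsto g atTop (𝓝 0) := by
    rw [tendsto_pi_nhds]
    intro i
    have habs : Tendsto (fun n => |g n i|) atTop (𝓝 0) := by
      apply squeeze_zero (fun n => abs_nonneg _) (g := fun n => Real.sqrt (G n))
      · intro n
        apply Real.abs_le_sqrt
        rw [pow_two]
        exact Finset.single_le_sum (f := fun k => g n k * g n k)
          (fun k _ => mul_self_nonneg _) (Finset.mem_univ i)
      · have h := (Real.continuous_sqrt.tendsto 0).comp hGtend
        simpa [Function.comp_def] using h
    exact (tendsto_zero_iff_abs_tendsto_zero _).2 habs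
  -- the error vector and function values
  set ee : ℕ → Fin N → ℝ := fun n => x n - xstar with heedef
  have hge : ∀ n, g n = A *ᵥ ee n := by
    intro n
    show g n = A *ᵥ (x n - xstar)
    rw [hg n, Matrix.mulVec_sub, hxstar]
  set F : ℕ → ℝ := fun n => f (x n) - f xstar with hFdef
  have hfy : ∀ y : Fin N → ℝ, f y - f xstar = (1/2) * ((y - xstar) ⬝ᵥ (A *ᵥ (y - xstar))) := by
    intro y
    rw [hf y, hf xstar, Matrix.mulVec_sub]
    simp only [sub_dotProduct, dotProduct_sub]
    have h1 : xstar ⬝ᵥ (A *ᵥ y) = y ⬝ᵥ (A *ᵥ xstar) := hsym _ _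
    have h2 : b ⬝ᵥ y = y ⬝ᵥ b := dotProduct_comm _ _
    have h3 : b ⬝ᵥ xstar = xstar ⬝ᵥ b := dotProduct_comm _ _
    rw [h1, h2, h3, hxstar]
    ring
  have hFval : ∀ n, F n = (1/2) * (ee n ⬝ᵥ (A *ᵥ ee n)) := fun n => hfy (x n)
  have hFg : ∀ n, F n = (1/2) * (ee n ⬝ᵥ g n) := by
    intro n
    rw [hge n]
    exact hFval n
  have hene : ∀ n, ee n ≠ 0 := fun n h => hgne n (by rw [hge n, h, Matrix.mulVec_zero])
  have hFpos : ∀ n, 0 < F n := by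
    intro n
    rw [hFval n]
    have := hpd (ee n) (hene n)
    linarith
  have herec : ∀ n, ee (n + 1) = ee n - alpha n • g n := by
    intro n
    show x (n + 1) - xstar = (x n - xstar) - alpha n • g n
    rw [hx n]
    abel
  have heg : ∀ n, ee n ⬝ᵥ (A *ᵥ g n) = G n := by
    intro n
    have h := hsym (ee n) (g n)
    rw [h, ← hge n]
  have hFdec : ∀ n, F n - F (n + 1) = (1/2) * alpha n * (G n + G (n + 1)) := by
    intro n
    have c1 : g n ⬝ᵥ (A *ᵥ g n) = s n := rfl
    have c4 : g n ⬝ᵥ g n = G n := rfl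
    have hge'' : g n ⬝ᵥ ee n = ee n ⬝ᵥ g n := dotProduct_comm _ _
    have e1 : ee (n + 1) ⬝ᵥ g (n + 1) =
        ee n ⬝ᵥ g n - 2 * (alpha n * G n) + alpha n * (alpha n * s n) := by
      rw [herec n, hgrec n]
      simp only [sub_dotProduct, dotProduct_sub, smul_dotProduct, dotProduct_smul, smul_eq_mul]
      rw [heg n, c1, c4]
      ring
    have e2 := hG' n
    rw [hFg n, hFg (n + 1), e1]
    rw [e2]
    ring
  have hFtend : Tendsto F atTop (𝓝 0) := by
    have hdet : IsUnit A.det := isUnit_iff_ne_zero.2 (hA.det_pos).ne'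
    have hBA : A⁻¹ * A = 1 := Matrix.nonsing_inv_mul A hdet
    have hee2 : ∀ n, ee n = A⁻¹ *ᵥ g n := by
      intro n
      rw [hge n, Matrix.mulVec_mulVec, hBA, Matrix.one_mulVec]
    have het : Tendsto ee atTop (𝓝 0) := by
      have h := tendsto_mulVec_aux A⁻¹ hgtend
      rw [Matrix.mulVec_zero] at h
      exact Tendsto.congr (fun n => (hee2 n).symm) h
    have h := (tendsto_dotProduct_aux het hgtend).const_mul (1/2 : ℝ)
    have h2 : Tendsto F atTop (𝓝 ((1/2) * ((0 : Fin N → ℝ) ⬝ᵥ (0 : Fin N → ℝ)))) :=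
      Tendsto.congr (fun n => (hFg n).symm) h
    simpa using h2
  -- normalized gradient directions
  have hsqGpos : ∀ n, 0 < Real.sqrt (G n) := fun n => Real.sqrt_pos.2 (hGpos n)
  set u : ℕ → Fin N → ℝ := fun n => (Real.sqrt (G n))⁻¹ • g n with hudef
  have huu : ∀ n, u n ⬝ᵥ u n = 1 := by
    intro n
    show ((Real.sqrt (G n))⁻¹ • g n) ⬝ᵥ ((Real.sqrt (G n))⁻¹ • g n) = 1
    rw [smul_dotProduct, dotProduct_smul, smul_eq_mul, smul_eq_mul]
    have c4 : g n ⬝ᵥ g n = G n := rfl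
    rw [c4, ← mul_assoc, ← mul_inv, Real.mul_self_sqrt (hGpos n).le]
    exact inv_mul_cancel₀ (hGpos n).ne'
  have hmem : ∀ n, u n ∈ Metric.closedBall (0 : Fin N → ℝ) 1 := by
    intro n
    rw [Metric.mem_closedBall, dist_zero_right,
      pi_norm_le_iff_of_nonneg (by norm_num : (0:ℝ) ≤ 1)]
    intro i
    rw [Real.norm_eq_abs]
    have hui : u n i = (Real.sqrt (G n))⁻¹ * g n i := rfl
    have hb : g n i * g n i ≤ G n := Finset.single_le_sum (f := fun k => g n k * g n k)
      (fun k _ => mul_self_nonneg _) (Finset.mem_univ i)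
    have h1 : u n i * u n i ≤ 1 := by
      rw [hui]
      have e : (Real.sqrt (G n))⁻¹ * g n i * ((Real.sqrt (G n))⁻¹ * g n i)
          = (g n i * g n i) / G n := by
        rw [div_eq_mul_inv,
          show (G n)⁻¹ = (Real.sqrt (G n))⁻¹ * (Real.sqrt (G n))⁻¹ from by
            rw [← mul_inv, Real.mul_self_sqrt (hGpos n).le]]
        ring
      rw [e, div_le_one (hGpos n)]
      exact hb
    exact abs_le_one_iff_mul_self_le_one.2 h1
  have hurec : ∀ n, u (n + 1) = (Real.sqrt (R n))⁻¹ • (u n - alpha n • (A *ᵥ u n)) := by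
    intro n
    have hGR2 : Real.sqrt (G (n + 1)) = Real.sqrt (R n) * Real.sqrt (G n) := by
      rw [← Real.sqrt_mul (hRpos n).le]
      congr 1
      exact (div_mul_cancel₀ _ (hGpos n).ne').symm
    have hAu : A *ᵥ u n = (Real.sqrt (G n))⁻¹ • (A *ᵥ g n) := by
      show A *ᵥ ((Real.sqrt (G n))⁻¹ • g n) = _
      rw [Matrix.mulVec_smul]
    show (Real.sqrt (G (n + 1)))⁻¹ • g (n + 1) = _
    rw [hgrec n, hGR2, hAu, mul_inv]
    show ((Real.sqrt (R n))⁻¹ * (Real.sqrt (G n))⁻¹) • (g n - alpha n • (A *ᵥ g n)) =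
      (Real.sqrt (R n))⁻¹ • ((Real.sqrt (G n))⁻¹ • g n
        - alpha n • ((Real.sqrt (G n))⁻¹ • (A *ᵥ g n)))
    rw [smul_sub, smul_sub, smul_smul, smul_smul, smul_smul, smul_smul]
    congr 1
    ring_nf
  have hau : ∀ n, alpha n = (u n ⬝ᵥ (A *ᵥ u n)) / (u n ⬝ᵥ (A *ᵥ (A *ᵥ u n))) := by
    intro n
    have hc : ((Real.sqrt (G n))⁻¹) ^ 2 ≠ 0 := pow_ne_zero 2 (inv_ne_zero (hsqGpos n).ne')
    have h1 : u n ⬝ᵥ (A *ᵥ u n) = ((Real.sqrt (G n))⁻¹) ^ 2 * s n := by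
      show ((Real.sqrt (G n))⁻¹ • g n) ⬝ᵥ (A *ᵥ ((Real.sqrt (G n))⁻¹ • g n)) = _
      rw [Matrix.mulVec_smul, smul_dotProduct, dotProduct_smul, smul_eq_mul, smul_eq_mul]
      have c1 : g n ⬝ᵥ (A *ᵥ g n) = s n := rfl
      rw [c1]
      ring
    have h2 : u n ⬝ᵥ (A *ᵥ (A *ᵥ u n)) = ((Real.sqrt (G n))⁻¹) ^ 2 * d n := by
      show ((Real.sqrt (G n))⁻¹ • g n) ⬝ᵥ (A *ᵥ (A *ᵥ ((Real.sqrt (G n))⁻¹ • g n))) = _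
      rw [Matrix.mulVec_smul, Matrix.mulVec_smul, smul_dotProduct, dotProduct_smul,
        smul_eq_mul, smul_eq_mul]
      have c2 : g n ⬝ᵥ (A *ᵥ (A *ᵥ g n)) = d n := rfl
      rw [c2]
      ring
    rw [h1, h2, halpha' n, mul_div_mul_left _ _ hc]
  -- cosine identity
  have hcos : ∀ n, (u (n + 2) ⬝ᵥ u n) * Real.sqrt (R (n + 1)) = Real.sqrt (R n) := by
    intro n
    have h1 : u (n + 2) ⬝ᵥ u n = (Real.sqrt (G (n + 2)))⁻¹ * ((Real.sqrt (G n))⁻¹ * G (n + 1)) := by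
      show ((Real.sqrt (G (n + 2)))⁻¹ • g (n + 2)) ⬝ᵥ ((Real.sqrt (G n))⁻¹ • g n) = _
      rw [smul_dotProduct, dotProduct_smul, smul_eq_mul, smul_eq_mul, hinner2 n]
    have hR1' : Real.sqrt (R (n + 1)) = Real.sqrt (G (n + 2)) / Real.sqrt (G (n + 1)) := by
      show Real.sqrt (G (n + 2) / G (n + 1)) = _
      rw [Real.sqrt_div (hGpos _).le]
    have hR0' : Real.sqrt (R n) = Real.sqrt (G (n + 1)) / Real.sqrt (G n) := by
      show Real.sqrt (G (n + 1) / G n) = _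
      rw [Real.sqrt_div (hGpos _).le]
    rw [h1, hR1', hR0']
    have key : ∀ (s0 s1 s2 Gm : ℝ), s0 ≠ 0 → s1 ≠ 0 → s2 ≠ 0 → Gm = s1 * s1 →
        s2⁻¹ * (s0⁻¹ * Gm) * (s2 / s1) = s1 / s0 := by
      intro s0 s1 s2 Gm h0 h1 h2 hGm
      subst hGm
      field_simp
    exact key _ _ _ _ (hsqGpos n).ne' (hsqGpos (n+1)).ne' (hsqGpos (n+2)).ne'
      (Real.mul_self_sqrt (hGpos _).le).symm
  -- limit functionals
  set QQ : (Fin N → ℝ) → ℝ := fun w => (w ⬝ᵥ (A *ᵥ w)) / (w ⬝ᵥ (A *ᵥ (A *ᵥ w))) with hQdef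
  set SS : (Fin N → ℝ) → (Fin N → ℝ) :=
    fun w => (Real.sqrt L0)⁻¹ • (w - QQ w • (A *ᵥ w)) with hSdef
  have hQpos : ∀ w : Fin N → ℝ, w ⬝ᵥ w = 1 → 0 < QQ w ∧ 0 < w ⬝ᵥ (A *ᵥ (A *ᵥ w)) := by
    intro w hw
    have hwne : w ≠ 0 := by
      intro h
      rw [h, zero_dotProduct] at hw
      norm_num at hw
    have hd2 : w ⬝ᵥ (A *ᵥ (A *ᵥ w)) = (A *ᵥ w) ⬝ᵥ (A *ᵥ w) := hsym _ _
    have hdp : 0 < w ⬝ᵥ (A *ᵥ (A *ᵥ w)) := by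
      rw [hd2]
      exact hdotself_pos _ (fun h => hwne (hAinj _ h))
    exact ⟨div_pos (hpd w hwne) hdp, hdp⟩
  have hstep : ∀ (q : ℕ → ℕ) (w : Fin N → ℝ), Tendsto q atTop atTop →
      Tendsto (fun j => u (q j)) atTop (𝓝 w) →
      w ⬝ᵥ w = 1 ∧ Tendsto (fun j => alpha (q j)) atTop (𝓝 (QQ w)) ∧
      Tendsto (fun j => u (q j + 1)) atTop (𝓝 (SS w)) ∧ SS w ⬝ᵥ SS w = 1 := by
    intro q w hq hu
    have hw1 : w ⬝ᵥ w = 1 := by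
      refine tendsto_nhds_unique (tendsto_dotProduct_aux hu hu) ?_
      exact Tendsto.congr (fun j => (huu (q j)).symm) tendsto_const_nhds
    obtain ⟨hQp, hdp⟩ := hQpos w hw1
    have hat : Tendsto (fun j => alpha (q j)) atTop (𝓝 (QQ w)) := by
      have h1 := tendsto_dotProduct_aux hu (tendsto_mulVec_aux A hu)
      have h2 := tendsto_dotProduct_aux hu (tendsto_mulVec_aux A (tendsto_mulVec_aux A hu))
      exact Tendsto.congr (fun j => (hau (q j)).symm) (h1.div h2 hdp.ne')
    have hRq : Tendsto (fun j => R (q j)) atTop (𝓝 L0) := hRtend.comp hq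
    have hsq : Tendsto (fun j => (Real.sqrt (R (q j)))⁻¹) atTop (𝓝 ((Real.sqrt L0)⁻¹)) := by
      have h1 : Tendsto (fun j => Real.sqrt (R (q j))) atTop (𝓝 (Real.sqrt L0)) :=
        (Real.continuous_sqrt.tendsto L0).comp hRq
      exact h1.inv₀ (Real.sqrt_ne_zero'.2 hL0pos)
    have hut : Tendsto (fun j => u (q j + 1)) atTop (𝓝 (SS w)) := by
      have h1 : Tendsto (fun j => u (q j) - alpha (q j) • (A *ᵥ u (q j))) atTop
          (𝓝 (w - QQ w • (A *ᵥ w))) := hu.sub (hat.smul (tendsto_mulVec_aux A hu))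
      have h2 := hsq.smul h1
      exact Tendsto.congr (fun j => (hurec (q j)).symm) h2
    have hSunit : SS w ⬝ᵥ SS w = 1 := by
      refine tendsto_nhds_unique (tendsto_dotProduct_aux hut hut) ?_
      exact Tendsto.congr (fun j => (huu (q j + 1)).symm) tendsto_const_nhds
    exact ⟨hw1, hat, hut, hSunit⟩
  -- two-step decrease sequence
  set aa : ℕ → ℝ := fun k => F (2 * k) - F (2 * k + 2) with haadef
  have hSum2 : ∀ k, aa k = (1/2) * alpha (2*k) * (G (2*k) + G (2*k+1))
      + (1/2) * alpha (2*k+1) * (G (2*k+1) + G (2*k+2)) := by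
    intro k
    have h1 := hFdec (2*k)
    have h2 := hFdec (2*k+1)
    show F (2*k) - F (2*k+2) = _
    have e : (2*k+1) + 1 = 2*k+2 := by omega
    rw [e] at h2
    linarith
  have hapos2 : ∀ k, 0 < aa k := by
    intro k
    rw [hSum2 k]
    nlinarith [hapos (2*k), hapos (2*k+1), hGpos (2*k), hGpos (2*k+1), hGpos (2*k+2)]
  set B : ℕ → ℝ := fun k => alpha (2*k) * (1 + R (2*k))
      + alpha (2*k+1) * (R (2*k) + R (2*k) * R (2*k+1)) with hBdef
  have hGR : ∀ n, G (n + 1) = R n * G n := fun n => (div_mul_cancel₀ _ (hGpos n).ne').symm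
  have haB : ∀ k, aa k = (1/2) * G (2*k) * B k := by
    intro k
    rw [hSum2 k]
    show _ = (1/2) * G (2*k) * (alpha (2*k) * (1 + R (2*k))
      + alpha (2*k+1) * (R (2*k) + R (2*k) * R (2*k+1)))
    have e1 : G (2*k+1) = R (2*k) * G (2*k) := hGR (2*k)
    have e2 : G (2*k+2) = R (2*k+1) * G (2*k+1) := by
      have h := hGR (2*k+1)
      rwa [show 2*k+1+1 = 2*k+2 from by omega] at h
    rw [e2, e1]
    ring
  have hBpos : ∀ k, 0 < B k := by
    intro k
    by_contra h
    push_neg at h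
    have h2 : (1/2) * G (2*k) * B k ≤ 0 :=
      mul_nonpos_of_nonneg_of_nonpos (mul_nonneg (by norm_num) (hGpos _).le) h
    rw [← haB k] at h2
    exact absurd h2 (not_le.2 (hapos2 k))
  have hratio : ∀ k, aa (k+1) / aa k = (R (2*k) * R (2*k+1)) * (B (k+1) / B k) := by
    intro k
    rw [haB k, haB (k+1)]
    have e1 : G (2*(k+1)) = R (2*k+1) * (R (2*k) * G (2*k)) := by
      rw [show 2*(k+1) = (2*k+1)+1 from by omega, hGR (2*k+1), hGR (2*k)]
    rw [e1]
    field_simp [(hGpos (2*k)).ne', (hBpos k).ne']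
  -- main subsequence argument
  have hC1 : Tendsto (fun k => aa (k+1) / aa k) atTop (𝓝 (L0^2)) := by
    apply tendsto_of_subseq_tendsto
    intro ns hns
    obtain ⟨w, -, φ, hφ, hφt⟩ := tendsto_subseq_of_bounded
      (Metric.isBounded_closedBall (x := (0 : Fin N → ℝ)) (r := 1)) (fun k => hmem (2 * ns k))
    refine ⟨φ, ?_⟩
    set m : ℕ → ℕ := fun j => ns (φ j) with hmdef
    have hm : Tendsto m atTop atTop := hns.comp hφ.tendsto_atTop
    have hp : Tendsto (fun j => 2 * m j) atTop atTop :=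
      tendsto_atTop_mono (fun j => (by omega : m j ≤ 2 * m j)) hm
    have hp1 : Tendsto (fun j => 2 * m j + 1) atTop atTop :=
      tendsto_atTop_mono (fun j => (by omega : m j ≤ 2 * m j + 1)) hm
    have hp2 : Tendsto (fun j => 2 * m j + 2) atTop atTop :=
      tendsto_atTop_mono (fun j => (by omega : m j ≤ 2 * m j + 2)) hm
    have hp3 : Tendsto (fun j => 2 * m j + 3) atTop atTop :=
      tendsto_atTop_mono (fun j => (by omega : m j ≤ 2 * m j + 3)) hm
    have hu0 : Tendsto (fun j => u (2 * m j)) atTop (𝓝 w) := hφt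
    obtain ⟨hw1, ha0, hu1, hSw1⟩ := hstep (fun j => 2 * m j) w hp hu0
    obtain ⟨-, ha1, hu2', hSw2⟩ := hstep (fun j => 2 * m j + 1) (SS w) hp1 hu1
    have hu2 : Tendsto (fun j => u (2 * m j + 2)) atTop (𝓝 (SS (SS w))) :=
      Tendsto.congr (fun j => by rw [show 2 * m j + 1 + 1 = 2 * m j + 2 from by omega]) hu2'
    -- SS (SS w) = w via the cosine identity
    have hs0 : Real.sqrt L0 ≠ 0 := (Real.sqrt_ne_zero'.2 hL0pos)
    have hw2w : SS (SS w) ⬝ᵥ w = 1 := by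
      have h1 : Tendsto (fun j => (u (2 * m j + 2) ⬝ᵥ u (2 * m j)) * Real.sqrt (R (2 * m j + 1)))
          atTop (𝓝 ((SS (SS w) ⬝ᵥ w) * Real.sqrt L0)) :=
        (tendsto_dotProduct_aux hu2 hu0).mul ((Real.continuous_sqrt.tendsto _).comp (hRtend.comp hp1))
      have h2 : Tendsto (fun j => Real.sqrt (R (2 * m j))) atTop (𝓝 (Real.sqrt L0)) :=
        (Real.continuous_sqrt.tendsto _).comp (hRtend.comp hp)
      have h2' : Tendsto (fun j => (u (2 * m j + 2) ⬝ᵥ u (2 * m j)) * Real.sqrt (R (2 * m j + 1)))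
          atTop (𝓝 (Real.sqrt L0)) :=
        Tendsto.congr (fun j => (hcos (2 * m j)).symm) h2
      have h3 : (SS (SS w) ⬝ᵥ w) * Real.sqrt L0 = Real.sqrt L0 := tendsto_nhds_unique h1 h2'
      have h4 : (SS (SS w) ⬝ᵥ w) * Real.sqrt L0 = 1 * Real.sqrt L0 := by rw [h3, one_mul]
      exact mul_right_cancel₀ hs0 h4
    have hw2 : SS (SS w) = w := by
      have h1 : (SS (SS w) - w) ⬝ᵥ (SS (SS w) - w) = 0 := by
        simp only [sub_dotProduct, dotProduct_sub]
        have hc : w ⬝ᵥ SS (SS w) = SS (SS w) ⬝ᵥ w := dotProduct_comm _ _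
        rw [hSw2, hw1, hw2w, hc, hw2w]
        ring
      exact sub_eq_zero.1 (dotProduct_self_eq_zero.1 h1)
    have hu2w : Tendsto (fun j => u (2 * m j + 2)) atTop (𝓝 w) := hw2 ▸ hu2
    obtain ⟨-, ha2, hu3', -⟩ := hstep (fun j => 2 * m j + 2) w hp2 hu2w
    have hu3 : Tendsto (fun j => u (2 * m j + 3)) atTop (𝓝 (SS w)) :=
      Tendsto.congr (fun j => by rw [show 2 * m j + 2 + 1 = 2 * m j + 3 from by omega]) hu3'
    obtain ⟨-, ha3, -, -⟩ := hstep (fun j => 2 * m j + 3) (SS w) hp3 hu3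
    have hR0 : Tendsto (fun j => R (2 * m j)) atTop (𝓝 L0) := hRtend.comp hp
    have hR1 : Tendsto (fun j => R (2 * m j + 1)) atTop (𝓝 L0) := hRtend.comp hp1
    have hR2 : Tendsto (fun j => R (2 * m j + 2)) atTop (𝓝 L0) := hRtend.comp hp2
    have hR3 : Tendsto (fun j => R (2 * m j + 3)) atTop (𝓝 L0) := hRtend.comp hp3
    set Bstar : ℝ := QQ w * (1 + L0) + QQ (SS w) * (L0 + L0 * L0) with hBstardef
    have hBm : Tendsto (fun j => B (m j)) atTop (𝓝 Bstar) := by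
      have e : ∀ j, B (m j) = alpha (2 * m j) * (1 + R (2 * m j))
          + alpha (2 * m j + 1) * (R (2 * m j) + R (2 * m j) * R (2 * m j + 1)) := fun j => rfl
      exact Tendsto.congr (fun j => (e j).symm)
        ((ha0.mul (tendsto_const_nhds.add hR0)).add (ha1.mul (hR0.add (hR0.mul hR1))))
    have hBm1 : Tendsto (fun j => B (m j + 1)) atTop (𝓝 Bstar) := by
      have e : ∀ j, B (m j + 1) = alpha (2 * m j + 2) * (1 + R (2 * m j + 2))
          + alpha (2 * m j + 3) * (R (2 * m j + 2) + R (2 * m j + 2) * R (2 * m j + 3)) := by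
        intro j
        show alpha (2 * (m j + 1)) * (1 + R (2 * (m j + 1)))
          + alpha (2 * (m j + 1) + 1) * (R (2 * (m j + 1)) + R (2 * (m j + 1)) * R (2 * (m j + 1) + 1)) = _
        rw [show 2 * (m j + 1) = 2 * m j + 2 from by omega,
          show 2 * m j + 2 + 1 = 2 * m j + 3 from by omega]
      exact Tendsto.congr (fun j => (e j).symm)
        ((ha2.mul (tendsto_const_nhds.add hR2)).add (ha3.mul (hR2.add (hR2.mul hR3))))
    have hQwpos : 0 < QQ w := (hQpos w hw1).1
    have hQw1pos : 0 < QQ (SS w) := (hQpos (SS w) hSw1).1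
    have hBstarpos : 0 < Bstar := by
      rw [hBstardef]
      nlinarith [hQwpos, hQw1pos, hL0pos]
    refine Tendsto.congr (fun j => (hratio (m j)).symm) ?_
    have h := (hR0.mul hR1).mul (hBm1.div hBm hBstarpos.ne')
    have e : (L0 * L0) * (Bstar / Bstar) = L0^2 := by
      rw [div_self hBstarpos.ne']
      ring
    rw [← e]
    exact h
  -- assemble the two limits
  refine ⟨L0^2, ?_, ?_⟩
  · have hL2 : 0 < L0^2 := pow_pos hL0pos 2
    have hpos2 : ∀ n, 0 < F (2*n) := fun n => hFpos _
    have hdec2 : ∀ n, F (2*(n+1)) < F (2*n) := by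
      intro n
      have h2 : 0 < F (2*n) - F (2*n+2) := hapos2 n
      have e : 2*(n+1) = 2*n+2 := by omega
      rw [e]
      linarith
    have hF02 : Tendsto (fun n => F (2*n)) atTop (𝓝 0) :=
      hFtend.comp (tendsto_atTop_mono (fun n => (by omega : n ≤ 2*n)) tendsto_id)
    have hr2 : Tendsto (fun n => (F (2*(n+1)) - F (2*(n+2))) / (F (2*n) - F (2*(n+1))))
        atTop (𝓝 (L0^2)) := by
      refine Tendsto.congr (fun k => ?_) hC1
      have e1 : aa (k+1) = F (2*(k+1)) - F (2*(k+2)) := by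
        show F (2*(k+1)) - F (2*(k+1)+2) = _
        rw [show 2*(k+1)+2 = 2*(k+2) from by omega]
      have e2 : aa k = F (2*k) - F (2*(k+1)) := by
        show F (2*k) - F (2*k+2) = _
        rw [show 2*k+2 = 2*(k+1) from by omega]
      rw [e1, e2]
    have h := tail_ratio_lemma (F := fun n => F (2*n)) hL2 hpos2 hdec2 hF02 hr2
    refine Tendsto.congr (fun n => ?_) h
    have e : 2*(n+1) = 2*n+2 := by omega
    show F (2*(n+1)) / F (2*n) = _
    rw [e]
  · have e : ∀ n, (g (n+1) ⬝ᵥ g (n+1))^2 / (g n ⬝ᵥ g n)^2 = (R n)^2 := by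
      intro n
      show _ = (G (n+1) / G n)^2
      rw [div_pow]
    exact Tendsto.congr (fun n => (e n).symm) (hRtend.pow 2)
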